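/- arXiv:2305.14496 — 9 statements merged into one kernel-verified Lean document; each statement's English description precedes it below -/
import Mathlib

section
/- Let E0 ⊆ E be a bounded set and suppose the rate-function family satisfies the growth conditions (G1) and (G2). Fix r > 0 and δ ≥ 0, and let (θ_T)_{T>0} ⊆ Θ and (θ'_{0,T})_{T>0} ⊆ E0 be families such that a_T(θ'_{0,T} − θ_T) ∈ S^δ_{θ_T,r} for all T > 0. Then there exist constants C0 > 0 (depending only on E0) and T0 > 0 such that max{‖θ_T‖, a_T‖θ'_{0,T} − θ_T‖} ≤ C0 for all T ≥ T0. -/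
set_option autoImplicit false

open Filter Topology Metric Set MeasureTheory

noncomputable section

variable {E : Type*} [NormedAddCommGroup E] [NormedSpace ℝ E]

/-- The sublevel set `S_{θ,r} = {ϑ ∈ E : I_θ(ϑ) ≤ r}` of the rate function. -/
def sublevelSet (I : E → E → ENNReal) (θ : E) (r : ℝ) : Set E :=
  {ϑ : E | I θ ϑ ≤ ENNReal.ofReal r}

/-- The open `δ`-fattening `S^δ_{θ,r}` of the sublevel set, where `S^0_{θ,r} = S_{θ,r}`;
for `δ > 0` it is the set of points at distance `< δ` from `S_{θ,r}`, i.e. the union of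
open balls of radius `δ` around points of `S_{θ,r}`. -/
def fatSublevel (I : E → E → ENNReal) (θ : E) (r δ : ℝ) : Set E :=
  if δ = 0 then sublevelSet I θ r
  else ⋃ ϑ ∈ sublevelSet I θ r, Metric.ball ϑ δ

/-- Growth condition (G1): for sequences `θ_n ∈ Θ` with `sup_n ‖θ_n‖ < ∞` and
`‖ϑ_n‖ → ∞`, `I_{θ_n}(ϑ_n) → ∞`. -/
def GrowthG1 (Θ : Set E) (I : E → E → ENNReal) : Prop :=
  ∀ θs ϑs : ℕ → E, (∀ n, θs n ∈ Θ) → (∃ C : ℝ, ∀ n, ‖θs n‖ ≤ C) →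
    Tendsto (fun n => ‖ϑs n‖) atTop atTop →
    Tendsto (fun n => I (θs n) (ϑs n)) atTop (nhds ⊤)

/-- Growth condition (G2): for sequences `θ_n ∈ Θ` with `‖θ_n‖ → ∞` and
`‖ϑ_n‖/‖θ_n‖ → ∞`, `limsup_n I_{θ_n}(ϑ_n) = ∞`. -/
def GrowthG2 (Θ : Set E) (I : E → E → ENNReal) : Prop :=
  ∀ θs ϑs : ℕ → E, (∀ n, θs n ∈ Θ) →
    Tendsto (fun n => ‖θs n‖) atTop atTop →
    Tendsto (fun n => ‖ϑs n‖ / ‖θs n‖) atTop atTop →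
    Filter.limsup (fun n => I (θs n) (ϑs n)) atTop = ⊤

/-- The upper confidence bound `J̄^δ_{T,r}(θ') = sup {J(θ) : θ ∈ Θ, a_T (θ' - θ) ∈ S^δ_{θ,r}}`. -/
def upperCB (Θ : Set E) (I : E → E → ENNReal) (J : E → ℝ) (r δ : ℝ) (a : ℝ → ℝ)
    (T : ℝ) (θ' : E) : ℝ :=
  sSup (J '' {θ : E | θ ∈ Θ ∧ a T • (θ' - θ) ∈ fatSublevel I θ r δ})

/-- The lower confidence bound `J̲^δ_{T,r}(θ') = inf {J(θ) : θ ∈ Θ, a_T (θ' - θ) ∈ S^δ_{θ,r}}`. -/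
def lowerCB (Θ : Set E) (I : E → E → ENNReal) (J : E → ℝ) (r δ : ℝ) (a : ℝ → ℝ)
    (T : ℝ) (θ' : E) : ℝ :=
  sInf (J '' {θ : E | θ ∈ Θ ∧ a T • (θ' - θ) ∈ fatSublevel I θ r δ})

/-! If the bound failed, there would be `T_n → ∞` along which
`max ‖θ_n‖ (a_n ‖θ'_n - θ_n‖) → ∞`, together with points `ϑ_n` of rate at most `r` lying within
`δ` of `a_n (θ'_n - θ_n)`. If `‖θ_n‖ → ∞`, boundedness of `E0` gives `‖θ'_n - θ_n‖ ≥ ‖θ_n‖ / 2`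
eventually, so `‖ϑ_n‖ / ‖θ_n‖ ≥ a_n / 2 - δ / ‖θ_n‖ → ∞`, contradicting (G2). Otherwise
`‖θ_n‖` stays bounded along a subsequence, on which `a_n ‖θ'_n - θ_n‖`, hence `‖ϑ_n‖`, tends
to `∞`, contradicting (G1). -/

section

variable {F : Type*} [NormedAddCommGroup F]

lemma exists_mem_sublevelSet_norm_ge_of_mem_fatSublevel {I : F → F → ENNReal} {θ x : F}
    {r δ : ℝ} (hx : x ∈ fatSublevel I θ r δ) : ∃ ϑ ∈ sublevelSet I θ r, ‖x‖ - δ ≤ ‖ϑ‖ := by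
  unfold fatSublevel at hx
  split_ifs at hx with hδ
  · exact ⟨x, hx, by simp [hδ]⟩
  · obtain ⟨ϑ, hϑ, hxϑ⟩ := mem_iUnion₂.mp hx
    refine ⟨ϑ, hϑ, ?_⟩
    have := norm_sub_norm_le x ϑ
    rw [mem_ball, dist_eq_norm] at hxϑ
    linarith

lemma GrowthG1.not_tendsto_norm_atTop {Θ : Set F} {I : F → F → ENNReal} (hG1 : GrowthG1 Θ I)
    {θs ϑs : ℕ → F} {C : ℝ} {c : ENNReal} (hΘ : ∀ n, θs n ∈ Θ) (hC : ∀ n, ‖θs n‖ ≤ C)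
    (hI : ∀ n, I (θs n) (ϑs n) ≤ c) (hc : c ≠ ⊤) :
    ¬ Tendsto (fun n => ‖ϑs n‖) atTop atTop := fun hϑ =>
  have ⟨n, hn⟩ := ((hG1 θs ϑs hΘ ⟨C, hC⟩ hϑ).eventually (Ioi_mem_nhds hc.lt_top)).exists
  (hI n).not_gt hn

lemma GrowthG2.not_tendsto_norm_div_atTop {Θ : Set F} {I : F → F → ENNReal}
    (hG2 : GrowthG2 Θ I) {θs ϑs : ℕ → F} {c : ENNReal} (hΘ : ∀ n, θs n ∈ Θ)
    (hθ : Tendsto (fun n => ‖θs n‖) atTop atTop)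
    (hI : ∀ n, I (θs n) (ϑs n) ≤ c) (hc : c ≠ ⊤) :
    ¬ Tendsto (fun n => ‖ϑs n‖ / ‖θs n‖) atTop atTop := fun hϑ => by
  refine hc (top_le_iff.mp ?_)
  rw [← hG2 θs ϑs hΘ hθ hϑ]
  exact limsup_le_of_le (h := .of_forall hI)

lemma tendsto_norm_div_norm_atTop {a : ℕ → ℝ} {θs θ's ϑs : ℕ → F} {M δ : ℝ}
    (ha : Tendsto a atTop atTop) (hθ : Tendsto (fun n => ‖θs n‖) atTop atTop)
    (hθ' : ∀ n, ‖θ's n‖ ≤ M) (hϑ : ∀ n, a n * ‖θ's n - θs n‖ - δ ≤ ‖ϑs n‖) :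
    Tendsto (fun n => ‖ϑs n‖ / ‖θs n‖) atTop atTop := by
  have hlower : Tendsto (fun n => a n / 2 + -δ / ‖θs n‖) atTop atTop :=
    (ha.atTop_div_const two_pos).atTop_add (tendsto_const_nhds.div_atTop hθ)
  refine tendsto_atTop_mono' _ ?_ hlower
  filter_upwards [hθ.eventually_ge_atTop (max (2 * M) 1), ha.eventually_ge_atTop 0]
    with n hθn han
  have hθpos : 0 < ‖θs n‖ := by linarith [le_max_right (2 * M) 1]
  have hhalf : ‖θs n‖ / 2 ≤ ‖θ's n - θs n‖ := by
    linarith [norm_sub_norm_le (θs n) (θ's n), norm_sub_rev (θs n) (θ's n),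
      hθ' n, le_max_left (2 * M) 1]
  rw [le_div_iff₀ hθpos, add_mul, div_mul_cancel₀ _ hθpos.ne']
  nlinarith [mul_le_mul_of_nonneg_left hhalf han, hϑ n]

lemma not_tendsto_max_atTop {Θ : Set F} {I : F → F → ENNReal} (hG1 : GrowthG1 Θ I)
    (hG2 : GrowthG2 Θ I) {a : ℕ → ℝ} {θs θ's ϑs : ℕ → F} {M δ : ℝ} {c : ENNReal}
    (hΘ : ∀ n, θs n ∈ Θ) (hI : ∀ n, I (θs n) (ϑs n) ≤ c) (hc : c ≠ ⊤)
    (ha : Tendsto a atTop atTop) (hθ' : ∀ n, ‖θ's n‖ ≤ M)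
    (hϑ : ∀ n, a n * ‖θ's n - θs n‖ - δ ≤ ‖ϑs n‖) :
    ¬ Tendsto (fun n => max ‖θs n‖ (a n * ‖θ's n - θs n‖)) atTop atTop := by
  intro hmax
  by_cases hθ : Tendsto (fun n => ‖θs n‖) atTop atTop
  · exact hG2.not_tendsto_norm_div_atTop hΘ hθ hI hc (tendsto_norm_div_norm_atTop ha hθ hθ' hϑ)
  obtain ⟨C, hC⟩ : ∃ C, ∃ᶠ n in atTop, ‖θs n‖ < C := by
    simpa only [Filter.tendsto_atTop, not_forall, not_eventually, not_le] using hθ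
  obtain ⟨φ, hφ, hCφ⟩ := extraction_of_frequently_atTop hC
  have hmaxφ := hmax.comp hφ.tendsto_atTop
  have hsecond : Tendsto (fun k => a (φ k) * ‖θ's (φ k) - θs (φ k)‖) atTop atTop := by
    refine hmaxφ.congr' ?_
    filter_upwards [hmaxφ.eventually_ge_atTop C] with k hk
    exact max_eq_right ((hCφ k).le.trans ((le_max_iff.mp hk).resolve_left (hCφ k).not_ge))
  refine hG1.not_tendsto_norm_atTop (fun k => hΘ (φ k)) (fun k => (hCφ k).le)
    (fun k => hI (φ k)) hc ?_
  refine tendsto_atTop_mono (fun k => ?_) (tendsto_atTop_add_const_right _ (-δ) hsecond)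
  linarith [hϑ (φ k)]

end

theorem stmt1_general (Θ : Set E) (I : E → E → ENNReal)
    (a : ℝ → ℝ) (hatop : Tendsto a atTop atTop)
    (hG1 : GrowthG1 Θ I) (hG2 : GrowthG2 Θ I)
    (r δ : ℝ)
    (E0 : Set E) (hE0 : Bornology.IsBounded E0)
    (θf θ'f : ℝ → E)
    (hθf : ∀ T > 0, θf T ∈ Θ) (hθ'f : ∀ T > 0, θ'f T ∈ E0)
    (hfeas : ∀ T > 0, a T • (θ'f T - θf T) ∈ fatSublevel I (θf T) r δ) :
    ∃ C0 > 0, ∃ T0 > 0, ∀ T ≥ T0, max ‖θf T‖ (a T * ‖θ'f T - θf T‖) ≤ C0 := by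
  obtain ⟨M, hM⟩ := hE0.exists_norm_le
  by_contra! hunbounded
  choose T hT hlarge using fun n : ℕ =>
    hunbounded (n + 1) n.cast_add_one_pos (n + 1) n.cast_add_one_pos
  have hTpos : ∀ n, 0 < T n := fun n => n.cast_add_one_pos.trans_le (hT n)
  have hTtop : Tendsto T atTop atTop :=
    tendsto_atTop_mono hT (tendsto_atTop_add_const_right _ 1 tendsto_natCast_atTop_atTop)
  choose ϑ hϑI hϑ using fun n =>
    exists_mem_sublevelSet_norm_ge_of_mem_fatSublevel (hfeas (T n) (hTpos n))
  have hϑ' : ∀ n, a (T n) * ‖θ'f (T n) - θf (T n)‖ - δ ≤ ‖ϑ n‖ := fun n => by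
    have hmul : a (T n) * ‖θ'f (T n) - θf (T n)‖ ≤ ‖a (T n) • (θ'f (T n) - θf (T n))‖ := by
      rw [norm_smul, Real.norm_eq_abs]
      gcongr
      exact le_abs_self _
    linarith [hϑ n]
  refine not_tendsto_max_atTop hG1 hG2 (fun n => hθf _ (hTpos n)) hϑI ENNReal.ofReal_ne_top
    (hatop.comp hTtop) (fun n => hM _ (hθ'f _ (hTpos n))) hϑ' ?_
  exact tendsto_atTop_mono (fun n => (hlarge n).le)
    (tendsto_atTop_add_const_right _ 1 tendsto_natCast_atTop_atTop)

/-- under the growth conditions (G1) and (G2), families `θ_T ∈ Θ` and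
`θ'_{0,T}` in a bounded set `E0` with `a_T(θ'_{0,T} − θ_T) ∈ S^δ_{θ_T,r}` satisfy
`max (‖θ_T‖) (a_T ‖θ'_{0,T} − θ_T‖) ≤ C0` for all `T ≥ T0`. -/
theorem stmt1 (Θ : Set E) (hΘ : Θ.Nonempty) (I : E → E → ENNReal)
    (a : ℝ → ℝ) (hapos : ∀ T > 0, 0 < a T) (hatop : Tendsto a atTop atTop)
    (hG1 : GrowthG1 Θ I) (hG2 : GrowthG2 Θ I)
    (r δ : ℝ) (hr : 0 < r) (hδ : 0 ≤ δ)
    (E0 : Set E) (hE0 : Bornology.IsBounded E0)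
    (θf θ'f : ℝ → E)
    (hθf : ∀ T > 0, θf T ∈ Θ) (hθ'f : ∀ T > 0, θ'f T ∈ E0)
    (hfeas : ∀ T > 0, a T • (θ'f T - θf T) ∈ fatSublevel I (θf T) r δ) :
    ∃ C0 > 0, ∃ T0 > 0, ∀ T ≥ T0, max ‖θf T‖ (a T * ‖θ'f T - θf T‖) ≤ C0 :=
  stmt1_general Θ I a hatop hG1 hG2 r δ E0 hE0 θf θ'f hθf hθ'f hfeas
end
end

section
/- Let E0 ⊆ E be a bounded set and suppose the rate-function family satisfies the growth conditions (G1) and (G2). Fix r > 0 and δ ≥ 0, and for T > 0 and θ' ∈ E define the feasible set 𝓘_{T,r}(θ') = {θ ∈ Θ : a_T(θ' − θ) ∈ S^δ_{θ,r}}. Then there exist constants C0 > 0 and T0 > 0 (depending only on E0) such that sup_{T ≥ T0} sup_{θ'_0 ∈ E0} sup_{θ ∈ 𝓘_{T,r}(θ'_0)} max{‖θ‖, a_T‖θ'_0 − θ‖} ≤ C0. -/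
/-!
By (G1), sublevel sets `S_{θ,r}` are bounded uniformly for `θ` in a bounded set, and by (G2)
they grow at most linearly in `‖θ‖` for large `‖θ‖`. If `θ` is feasible for `θ'₀ ∈ E0`, some
`ϑ ∈ S_{θ,r}` satisfies `a_T ‖θ'₀ - θ‖ ≤ ‖ϑ‖ + δ`. For large `‖θ‖` the left side is of order
`a_T ‖θ‖` and the right side of order `‖θ‖`, which is impossible once `a_T` is large; so `θ`
stays bounded, and then the uniform bound on `‖ϑ‖` bounds `a_T ‖θ'₀ - θ‖`.
-/

set_option autoImplicit false

open Filter Topology Metric Set MeasureTheory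

section

variable {E : Type*} [NormedAddCommGroup E]

theorem exists_mem_sublevelSet_norm_le_add_of_mem_fatSublevel {I : E → E → ENNReal} {θ v : E}
    {r δ : ℝ} (hv : v ∈ fatSublevel I θ r δ) : ∃ ϑ ∈ sublevelSet I θ r, ‖v‖ ≤ ‖ϑ‖ + δ := by
  unfold fatSublevel at hv
  split_ifs at hv with hδ
  · exact ⟨v, hv, by simp [hδ]⟩
  · simp only [Set.mem_iUnion, Metric.mem_ball, dist_eq_norm, exists_prop] at hv
    obtain ⟨ϑ, hϑ, hdist⟩ := hv
    exact ⟨ϑ, hϑ, by linarith [norm_sub_norm_le v ϑ]⟩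

theorem GrowthG1.exists_norm_le {Θ : Set E} {I : E → E → ENNReal} (hG1 : GrowthG1 Θ I)
    (C r : ℝ) : ∃ R : ℝ, ∀ θ ∈ Θ, ‖θ‖ ≤ C → ∀ ϑ ∈ sublevelSet I θ r, ‖ϑ‖ ≤ R := by
  by_contra! h
  choose θs hθs hθC ϑs hϑs hϑn using fun n : ℕ => h n
  have hϑtop : Tendsto (fun n => ‖ϑs n‖) atTop atTop :=
    tendsto_atTop_mono (fun n => (hϑn n).le) tendsto_natCast_atTop_atTop
  have hItop := hG1 θs ϑs hθs ⟨C, hθC⟩ hϑtop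
  exact ENNReal.ofReal_ne_top (top_le_iff.mp (le_of_tendsto hItop (.of_forall hϑs)))

theorem GrowthG2.exists_norm_le_mul {Θ : Set E} {I : E → E → ENNReal} (hG2 : GrowthG2 Θ I)
    (r : ℝ) : ∃ K R : ℝ, ∀ θ ∈ Θ, R ≤ ‖θ‖ → ∀ ϑ ∈ sublevelSet I θ r, ‖ϑ‖ ≤ K * ‖θ‖ := by
  by_contra! h
  choose θs hθs hθR ϑs hϑs hϑK using fun n : ℕ => h n (n + 1)
  have hθpos (n : ℕ) : 0 < ‖θs n‖ := lt_of_lt_of_le (by positivity) (hθR n)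
  have hθtop : Tendsto (fun n => ‖θs n‖) atTop atTop :=
    tendsto_atTop_mono (fun n => (le_add_of_nonneg_right zero_le_one).trans (hθR n))
      tendsto_natCast_atTop_atTop
  have hratio : Tendsto (fun n => ‖ϑs n‖ / ‖θs n‖) atTop atTop :=
    tendsto_atTop_mono (fun n => ((lt_div_iff₀ (hθpos n)).2 (hϑK n)).le)
      tendsto_natCast_atTop_atTop
  have hlimsup := hG2 θs ϑs hθs hθtop hratio
  have hle : limsup (fun n => I (θs n) (ϑs n)) atTop ≤ ENNReal.ofReal r :=
    limsup_le_of_le (h := .of_forall hϑs)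
  exact ENNReal.ofReal_ne_top (top_le_iff.mp (hlimsup ▸ hle))

end

variable {E : Type*} [NormedAddCommGroup E] [NormedSpace ℝ E]

theorem stmt2_general (Θ : Set E) (I : E → E → ENNReal)
    (a : ℝ → ℝ) (hatop : Tendsto a atTop atTop)
    (hG1 : GrowthG1 Θ I) (hG2 : GrowthG2 Θ I)
    (r δ : ℝ)
    (E0 : Set E) (hE0 : Bornology.IsBounded E0) :
    ∃ C0 > 0, ∃ T0 > 0, ∀ T ≥ T0, ∀ θ'0 ∈ E0, ∀ θ ∈ Θ,
      a T • (θ'0 - θ) ∈ fatSublevel I θ r δ →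
        max ‖θ‖ (a T * ‖θ'0 - θ‖) ≤ C0 := by
  obtain ⟨M, hM⟩ := hE0.exists_norm_le
  obtain ⟨K, R, hlinear⟩ := hG2.exists_norm_le_mul r
  set B := max (max R (2 * M)) δ
  obtain ⟨R', hbounded⟩ := hG1.exists_norm_le B r
  obtain ⟨T1, hT1⟩ := eventually_atTop.1 (hatop.eventually_ge_atTop (max (2 * K + 2) 0))
  refine ⟨max (max B (R' + δ)) 1, lt_max_of_lt_right one_pos, max T1 1,
    lt_max_of_lt_right one_pos, fun T hT θ' hθ' θ hθ hmem => ?_⟩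
  have ha := max_le_iff.1 (hT1 T (le_of_max_le_left hT))
  obtain ⟨ϑ, hϑ, hfar⟩ := exists_mem_sublevelSet_norm_le_add_of_mem_fatSublevel hmem
  rw [norm_smul, Real.norm_of_nonneg ha.2] at hfar
  have hθB : ‖θ‖ ≤ B := by
    by_contra! hB
    simp only [B, max_lt_iff] at hB
    have hϑ_le := hlinear θ hθ hB.1.1.le ϑ hϑ
    have hθ'θ : ‖θ‖ - M ≤ ‖θ' - θ‖ := by
      linarith [norm_sub_norm_le θ θ', norm_sub_rev θ θ', hM θ' hθ']
    have hhalf : a T * (‖θ‖ / 2) ≤ a T * (‖θ‖ - M) :=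
      mul_le_mul_of_nonneg_left (by linarith) ha.2
    have hgrowth : (K + 1) * ‖θ‖ ≤ a T * (‖θ‖ / 2) := by
      nlinarith [norm_nonneg θ]
    linarith [mul_le_mul_of_nonneg_left hθ'θ ha.2]
  have hϑR' := hbounded θ hθ hθB ϑ hϑ
  exact max_le (hθB.trans (le_max_of_le_left (le_max_left _ _)))
    (by linarith [le_max_right B (R' + δ), le_max_left (max B (R' + δ)) 1])

/-- uniform version of the boundedness of the feasible sets
`𝓘_{T,r}(θ') = {θ ∈ Θ : a_T(θ' − θ) ∈ S^δ_{θ,r}}` over a bounded set `E0`. -/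
theorem stmt2 (Θ : Set E) (hΘ : Θ.Nonempty) (I : E → E → ENNReal)
    (a : ℝ → ℝ) (hapos : ∀ T > 0, 0 < a T) (hatop : Tendsto a atTop atTop)
    (hG1 : GrowthG1 Θ I) (hG2 : GrowthG2 Θ I)
    (r δ : ℝ) (hr : 0 < r) (hδ : 0 ≤ δ)
    (E0 : Set E) (hE0 : Bornology.IsBounded E0) :
    ∃ C0 > 0, ∃ T0 > 0, ∀ T ≥ T0, ∀ θ'0 ∈ E0, ∀ θ ∈ Θ,
      a T • (θ'0 - θ) ∈ fatSublevel I θ r δ →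
        max ‖θ‖ (a T * ‖θ'0 - θ‖) ≤ C0 :=
  stmt2_general Θ I a hatop hG1 hG2 r δ E0 hE0
end

section
/- Let W be a metric space, let (ψ_T)_{T>0} be a family of functions W → ℝ that is eventually equi-lower semicontinuous, and let (φ_T)_{T>0} be a family of functions W → ℝ that is eventually equi-upper semicontinuous. If (φ_T) is eventually smaller than (ψ_T) at every point of W, then (φ_T) is eventually and uniformly smaller than (ψ_T) on compact sets of W. In particular, this holds if both families are eventually equicontinuous. -/
set_option autoImplicit false

open Filter Topology Metric Set

noncomputable section

variable {W : Type*} [MetricSpace W]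

/-- A family `(φ_T)_{T>0}` of functions `W → ℝ` is eventually equi-upper semicontinuous
at `w0`: for every `ε > 0` there are `δ > 0` and `T0 > 0` such that
`φ_T(w) − φ_T(w0) < ε` for all `w` in the closed `δ`-ball around `w0` and all `T ≥ T0`. -/
def EvEquiUSCAt (φ : ℝ → W → ℝ) (w0 : W) : Prop :=
  ∀ ε > (0 : ℝ), ∃ δ > (0 : ℝ), ∃ T0 > (0 : ℝ),
    ∀ T ≥ T0, ∀ w ∈ Metric.closedBall w0 δ, φ T w - φ T w0 < ε

/-- A family `(φ_T)_{T>0}` is eventually equi-lower semicontinuous at `w0` iff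
`(−φ_T)` is eventually equi-upper semicontinuous at `w0`. -/
def EvEquiLSCAt (φ : ℝ → W → ℝ) (w0 : W) : Prop :=
  EvEquiUSCAt (fun T w => -φ T w) w0

/-- A family `(φ_T)_{T>0}` of functions `W → ℝ` is eventually equicontinuous at `w0`:
for every `ε > 0` there are `δ > 0` and `T0 > 0` such that `|φ_T(w) − φ_T(w0)| < ε`
for all `w` in the closed `δ`-ball around `w0` and all `T ≥ T0`. -/
def EvEquicontinuousAt (φ : ℝ → W → ℝ) (w0 : W) : Prop :=
  ∀ ε > (0 : ℝ), ∃ δ > (0 : ℝ), ∃ T0 > (0 : ℝ),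
    ∀ T ≥ T0, ∀ w ∈ Metric.closedBall w0 δ, |φ T w - φ T w0| < ε

/-- if `(ψ_T)` is eventually equi-l.s.c., `(φ_T)` is eventually equi-u.s.c.,
and `(φ_T)` is eventually smaller than `(ψ_T)` at every point, then `(φ_T)` is eventually
and uniformly smaller than `(ψ_T)` on compact sets. In particular this holds when both
families are eventually equicontinuous. -/
theorem stmt3 (ψ φ : ℝ → W → ℝ)
    (hψ : ∀ w0 : W, EvEquiLSCAt ψ w0) (hφ : ∀ w0 : W, EvEquiUSCAt φ w0)
    (hsmall : ∀ w : W,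
      Filter.limsup (fun T => ((φ T w - ψ T w : ℝ) : EReal)) atTop ≤ 0) :
    ∀ K : Set W, IsCompact K →
      Filter.limsup (fun T => ⨆ w ∈ K, ((φ T w - ψ T w : ℝ) : EReal)) atTop ≤ 0 := by

  intro K hK
  -- it suffices to show limsup ≤ ε for every real ε > 0
  by_contra hcon
  push_neg at hcon
  obtain ⟨c, hc0, hclt⟩ := EReal.lt_iff_exists_real_btwn.mp hcon
  have hc0' : (0 : ℝ) < c := by exact_mod_cast hc0
  set ε := c / 2 with hε
  have hε0 : 0 < ε := by positivity
  -- for each point, get local data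
  have key : ∀ w0 : W, ∃ δ > (0:ℝ), ∃ T0 : ℝ, ∀ T ≥ T0, ∀ w ∈ Metric.ball w0 δ,
      φ T w - ψ T w < ε := by
    intro w0
    obtain ⟨δ1, hδ1, T1, _, h1⟩ := hφ w0 (ε/3) (by positivity)
    obtain ⟨δ2, hδ2, T2, _, h2⟩ := hψ w0 (ε/3) (by positivity)
    have h3 : ∀ᶠ T in atTop, ((φ T w0 - ψ T w0 : ℝ) : EReal) < ((ε/3 : ℝ) : EReal) := by
      refine Filter.eventually_lt_of_limsup_lt ?_ (by isBoundedDefault)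
      calc Filter.limsup (fun T => ((φ T w0 - ψ T w0 : ℝ) : EReal)) atTop ≤ 0 := hsmall w0
        _ < ((ε/3 : ℝ) : EReal) := by exact_mod_cast (by positivity : (0:ℝ) < ε/3)
    obtain ⟨T3, h3⟩ := (Filter.eventually_atTop).mp h3
    refine ⟨min δ1 δ2, lt_min hδ1 hδ2, max T1 (max T2 T3), fun T hT w hw => ?_⟩
    have hw1 : w ∈ Metric.closedBall w0 δ1 :=
      Metric.closedBall_subset_closedBall (min_le_left _ _) (Metric.ball_subset_closedBall hw)
    have hw2 : w ∈ Metric.closedBall w0 δ2 :=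
      Metric.closedBall_subset_closedBall (min_le_right _ _) (Metric.ball_subset_closedBall hw)
    have e1 := h1 T (le_trans (le_max_left _ _) hT) w hw1
    have e2 := h2 T (le_trans (le_trans (le_max_left _ _) (le_max_right _ _)) hT) w hw2
    have e3' := h3 T (le_trans (le_trans (le_max_right _ _) (le_max_right _ _)) hT)
    have e3 : φ T w0 - ψ T w0 < ε/3 := by exact_mod_cast e3'
    simp only at e2
    linarith
  choose δ hδ T0 hT0 using key
  -- compact cover
  obtain ⟨t, hcov⟩ := hK.elim_nhds_subcover' (fun w _ => Metric.ball w (δ w))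
    (fun w _ => Metric.ball_mem_nhds _ (hδ w))
  obtain ⟨M, hM⟩ : ∃ M : ℝ, ∀ w ∈ t, T0 w.1 ≤ M := by
    obtain ⟨M, hM⟩ := (t.image fun w => T0 w.1).exists_le
    exact ⟨M, fun w hw => hM _ (Finset.mem_image_of_mem _ hw)⟩
  have hev : ∀ᶠ T in atTop, (⨆ w ∈ K, ((φ T w - ψ T w : ℝ) : EReal)) ≤ ((ε : ℝ) : EReal) := by
    filter_upwards [Filter.eventually_ge_atTop M] with T hT
    refine iSup₂_le fun w hw => ?_
    obtain ⟨w0, hw0t, hwball⟩ : ∃ w0 ∈ t, w ∈ Metric.ball w0.1 (δ w0.1) := by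
      have := hcov hw
      simpa using this
    have := hT0 w0.1 T (le_trans (hM w0 hw0t) hT) w hwball
    exact_mod_cast this.le
  have hlim : Filter.limsup (fun T => ⨆ w ∈ K, ((φ T w - ψ T w : ℝ) : EReal)) atTop
      ≤ ((ε : ℝ) : EReal) := Filter.limsup_le_of_le (by isBoundedDefault) hev
  have : ((c : ℝ) : EReal) < ((ε : ℝ) : EReal) := lt_of_lt_of_le hclt hlim
  have : (c : ℝ) < ε := by exact_mod_cast this
  linarith
end
end

section
/- Suppose the rate-function family satisfies the growth conditions (G1) and (G2) and that I_θ(0) = 0 for every θ ∈ Θ, and let J : Θ → ℝ be continuous. Fix r > 0 and δ ≥ 0. Then for every θ' ∈ Θ, J̄^δ_{T,r}(θ') → J(θ') and J̲^δ_{T,r}(θ') → J(θ') as T → ∞. -/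
set_option autoImplicit false

open Filter Topology Metric Set MeasureTheory

noncomputable section

variable {E : Type*} [NormedAddCommGroup E] [NormedSpace ℝ E]

/-- pointwise convergence: under (G1), (G2), `I_θ(0) = 0` and continuity of
`J`, the bounds `J̄^δ_{T,r}(θ')` and `J̲^δ_{T,r}(θ')` converge to `J(θ')` for every
`θ' ∈ Θ` as `T → ∞`. -/
theorem stmt4 (Θ : Set E) (hΘ : Θ.Nonempty) (I : E → E → ENNReal) (J : E → ℝ)
    (a : ℝ → ℝ) (hapos : ∀ T > 0, 0 < a T) (hatop : Tendsto a atTop atTop)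
    (hG1 : GrowthG1 Θ I) (hG2 : GrowthG2 Θ I)
    (hI0 : ∀ θ ∈ Θ, I θ 0 = 0)
    (hJ : ContinuousOn J Θ)
    (r δ : ℝ) (hr : 0 < r) (hδ : 0 ≤ δ)
    (θ' : E) (hθ' : θ' ∈ Θ) :
    Tendsto (fun T => upperCB Θ I J r δ a T θ') atTop (nhds (J θ')) ∧
    Tendsto (fun T => lowerCB Θ I J r δ a T θ') atTop (nhds (J θ')) := by
  classical
  -- θ' always belongs to the feasible set
  have hmemθ' : ∀ T : ℝ, θ' ∈ {θ : E | θ ∈ Θ ∧ a T • (θ' - θ) ∈ fatSublevel I θ' r δ} := by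
    intro T
    refine ⟨hθ', ?_⟩
    have h0 : (0 : E) ∈ sublevelSet I θ' r := by
      simp [sublevelSet, hI0 θ' hθ']
    simp only [sub_self, smul_zero, fatSublevel]
    split_ifs with h
    · exact h0
    · exact Set.mem_biUnion h0 (Metric.mem_ball_self (lt_of_le_of_ne hδ (Ne.symm h)))
  -- extraction from fat sublevel membership
  have hfat : ∀ (θ x : E), x ∈ fatSublevel I θ r δ →
      ∃ ϑ, I θ ϑ ≤ ENNReal.ofReal r ∧ ‖x - ϑ‖ ≤ δ := by
    intro θ x hx
    unfold fatSublevel at hx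
    split_ifs at hx with h
    · exact ⟨x, hx, by simp [h]⟩
    · obtain ⟨ϑ, hϑ, hb⟩ := Set.mem_iUnion₂.mp hx
      refine ⟨ϑ, hϑ, le_of_lt ?_⟩
      rwa [Metric.mem_ball, dist_eq_norm] at hb
  -- key shrinking lemma
  have key : ∀ ε > (0:ℝ), ∀ᶠ T in (atTop : Filter ℝ),
      ∀ θ, θ ∈ Θ → a T • (θ' - θ) ∈ fatSublevel I θ r δ → ‖θ - θ'‖ < ε := by
    intro ε hε
    by_contra hcon
    rw [Filter.not_eventually] at hcon
    have hfreq : ∀ n : ℕ, ∃ T ≥ (n : ℝ), ∃ θ, θ ∈ Θ ∧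
        a T • (θ' - θ) ∈ fatSublevel I θ r δ ∧ ε ≤ ‖θ - θ'‖ := by
      intro n
      obtain ⟨T, hT, hP⟩ := Filter.frequently_atTop.mp hcon (n : ℝ)
      push_neg at hP
      obtain ⟨θ, h1, h2, h3⟩ := hP
      exact ⟨T, hT, θ, h1, h2, h3⟩
    choose T hTn θs hθsΘ hmem hfar using hfreq
    have hTtop : Tendsto T atTop atTop :=
      tendsto_atTop_mono hTn tendsto_natCast_atTop_atTop
    have haT : Tendsto (fun n => a (T n)) atTop atTop := hatop.comp hTtop
    set b : ℕ → ℝ := fun n => |a (T n)| with hbdef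
    have hb : Tendsto b atTop atTop := tendsto_abs_atTop_atTop.comp haT
    have hb0 : ∀ n, 0 ≤ b n := fun n => abs_nonneg _
    choose ϑs hϑI hϑclose using fun n => hfat (θs n) _ (hmem n)
    have hϑnorm : ∀ n, b n * ‖θ' - θs n‖ - δ ≤ ‖ϑs n‖ := by
      intro n
      have h1 : ‖a (T n) • (θ' - θs n)‖ = b n * ‖θ' - θs n‖ := by
        rw [norm_smul, Real.norm_eq_abs]
      have h2 := norm_sub_norm_le (a (T n) • (θ' - θs n)) (ϑs n)
      have h3 := hϑclose n
      linarith [h2.trans h3, h1 ▸ (le_refl (‖a (T n) • (θ' - θs n)‖))]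
    by_cases hbd : ∃ C, ∀ n, ‖θs n‖ ≤ C
    · -- bounded case : use G1
      have hϑtop : Tendsto (fun n => ‖ϑs n‖) atTop atTop := by
        refine tendsto_atTop_mono (fun n => ?_)
          (by simpa [sub_eq_add_neg] using
            tendsto_atTop_add_const_right atTop (-δ) (hb.atTop_mul_const hε))
        have h1 : ε ≤ ‖θ' - θs n‖ := by rw [norm_sub_rev]; exact hfar n
        have := hϑnorm n
        nlinarith [hb0 n]
      have htop := hG1 θs ϑs hθsΘ hbd hϑtop
      have hev : ∀ᶠ n in atTop, I (θs n) (ϑs n) ∈ Set.Ioi (ENNReal.ofReal r) :=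
        htop.eventually_mem (Ioi_mem_nhds ENNReal.ofReal_lt_top)
      obtain ⟨n, hn⟩ := hev.exists
      exact absurd (hϑI n) (not_le.mpr hn)
    · -- unbounded case : use G2
      push_neg at hbd
      have hfreq2 : ∀ m : ℕ, ∃ᶠ k in atTop, (m : ℝ) ≤ ‖θs k‖ := by
        intro m
        rw [Filter.frequently_atTop]
        intro N
        obtain ⟨k, hk⟩ := hbd ((m : ℝ) + ∑ j ∈ Finset.range N, ‖θs j‖)
        have hsum0 : (0:ℝ) ≤ ∑ j ∈ Finset.range N, ‖θs j‖ :=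
          Finset.sum_nonneg fun j _ => norm_nonneg _
        refine ⟨k, ?_, ?_⟩
        · by_contra hkN
          push_neg at hkN
          have : ‖θs k‖ ≤ ∑ j ∈ Finset.range N, ‖θs j‖ :=
            Finset.single_le_sum (fun j _ => norm_nonneg (θs j)) (Finset.mem_range.mpr hkN)
          have hm : (0:ℝ) ≤ (m:ℝ) := Nat.cast_nonneg m
          linarith
        · linarith
      obtain ⟨φ, hφ, hφge⟩ := Filter.extraction_forall_of_frequently hfreq2
      have hθtop : Tendsto (fun k => ‖θs (φ k)‖) atTop atTop :=
        tendsto_atTop_mono hφge tendsto_natCast_atTop_atTop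
      have hbφ : Tendsto (fun k => b (φ k)) atTop atTop := hb.comp hφ.tendsto_atTop
      have hratio : Tendsto (fun k => ‖ϑs (φ k)‖ / ‖θs (φ k)‖) atTop atTop := by
        refine tendsto_atTop_mono' atTop ?_
          (by simpa [sub_eq_add_neg] using
            tendsto_atTop_add_const_right atTop (-δ) (hbφ.atTop_div_const two_pos))
        filter_upwards [hθtop.eventually_ge_atTop (max (2 * ‖θ'‖) 1)] with k hk
        have hs1 : (1:ℝ) ≤ ‖θs (φ k)‖ := le_trans (le_max_right _ _) hk
        have hs2 : 2 * ‖θ'‖ ≤ ‖θs (φ k)‖ := le_trans (le_max_left _ _) hk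
        have hspos : (0:ℝ) < ‖θs (φ k)‖ := lt_of_lt_of_le one_pos hs1
        have htri : ‖θs (φ k)‖ - ‖θ'‖ ≤ ‖θ' - θs (φ k)‖ := by
          have := norm_sub_norm_le (θs (φ k)) θ'
          rw [norm_sub_rev]; linarith
        have hv := hϑnorm (φ k)
        rw [le_div_iff₀ hspos]
        nlinarith [hb0 (φ k), norm_nonneg θ']
      have hlim := hG2 (fun k => θs (φ k)) (fun k => ϑs (φ k)) (fun k => hθsΘ (φ k))
        hθtop hratio
      have hle : Filter.limsup (fun k => I (θs (φ k)) (ϑs (φ k))) atTop ≤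
          ENNReal.ofReal r :=
        Filter.limsup_le_of_le (by isBoundedDefault)
          (Filter.Eventually.of_forall fun k => hϑI (φ k))
      rw [hlim, top_le_iff] at hle
      exact absurd hle ENNReal.ofReal_lt_top.ne
  -- main conclusion
  constructor
  · rw [Metric.tendsto_nhds]
    intro ε hε
    obtain ⟨σ, hσ, hJσ⟩ := Metric.continuousWithinAt_iff.mp (hJ θ' hθ') (ε/2) (half_pos hε)
    filter_upwards [key σ hσ] with T hT
    set A := {θ : E | θ ∈ Θ ∧ a T • (θ' - θ) ∈ fatSublevel I θ r δ} with hA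
    have hmem' : θ' ∈ A := hmemθ' T
    have hbound : ∀ q ∈ J '' A, q ≤ J θ' + ε/2 := by
      rintro q ⟨θ, hθA, rfl⟩
      have hd : dist θ θ' < σ := by rw [dist_eq_norm]; exact hT θ hθA.1 hθA.2
      have := hJσ hθA.1 hd
      rw [Real.dist_eq] at this
      have := abs_lt.mp this
      linarith [this.2]
    have hne : (J '' A).Nonempty := ⟨J θ', θ', hmem', rfl⟩
    have hbdd : BddAbove (J '' A) := ⟨J θ' + ε/2, hbound⟩
    have hle : upperCB Θ I J r δ a T θ' ≤ J θ' + ε/2 := csSup_le hne hbound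
    have hge : J θ' ≤ upperCB Θ I J r δ a T θ' := le_csSup hbdd ⟨θ', hmem', rfl⟩
    rw [Real.dist_eq, abs_lt]
    constructor <;> linarith
  · rw [Metric.tendsto_nhds]
    intro ε hε
    obtain ⟨σ, hσ, hJσ⟩ := Metric.continuousWithinAt_iff.mp (hJ θ' hθ') (ε/2) (half_pos hε)
    filter_upwards [key σ hσ] with T hT
    set A := {θ : E | θ ∈ Θ ∧ a T • (θ' - θ) ∈ fatSublevel I θ r δ} with hA
    have hmem' : θ' ∈ A := hmemθ' T
    have hbound : ∀ q ∈ J '' A, J θ' - ε/2 ≤ q := by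
      rintro q ⟨θ, hθA, rfl⟩
      have hd : dist θ θ' < σ := by rw [dist_eq_norm]; exact hT θ hθA.1 hθA.2
      have := hJσ hθA.1 hd
      rw [Real.dist_eq] at this
      have := abs_lt.mp this
      linarith [this.1]
    have hne : (J '' A).Nonempty := ⟨J θ', θ', hmem', rfl⟩
    have hbdd : BddBelow (J '' A) := ⟨J θ' - ε/2, hbound⟩
    have hge : J θ' - ε/2 ≤ lowerCB Θ I J r δ a T θ' := le_csInf hne hbound
    have hle : lowerCB Θ I J r δ a T θ' ≤ J θ' := csInf_le hbdd ⟨θ', hmem', rfl⟩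
    rw [Real.dist_eq, abs_lt]
    constructor <;> linarith
end
end

section
/- Exponential accuracy of the optimal interval: Fix r > 0, δ > 0 and θ0 ∈ Θ, assume the LDP upper bound at θ0, and assume that each J̄^δ_{T,r} and J̲^δ_{T,r} is Borel measurable. Then limsup_{T→∞} (1/b_T) log P_{θ0}(J(θ0) > J̄^δ_{T,r}(θ̂_T)) ≤ −r and limsup_{T→∞} (1/b_T) log P_{θ0}(J(θ0) < J̲^δ_{T,r}(θ̂_T)) ≤ −r; consequently limsup_{T→∞} (1/b_T) log P_{θ0}(J(θ0) ∉ [J̲^δ_{T,r}(θ̂_T), J̄^δ_{T,r}(θ̂_T)]) ≤ −r. If moreover I_{θ0} : E → [0,∞] is continuous, the same conclusions hold for δ = 0. -/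
set_option autoImplicit false

open Filter Topology Metric Set MeasureTheory

noncomputable section

variable {E : Type*} [NormedAddCommGroup E] [NormedSpace ℝ E]

variable {Ω : Type*} [MeasurableSpace Ω]

/-- LDP lower bound at `θ0` for the family `a_T (θ̂_T − θ0)` with speed `b_T`:
for every open `G ⊆ E`,
`liminf_{T→∞} (1/b_T) log P(a_T(θ̂_T − θ0) ∈ G) ≥ − inf_{ϑ ∈ G} I(ϑ)`. -/
def LDPLowerAt (P : Measure Ω) (θhat : ℝ → Ω → E) (a b : ℝ → ℝ)
    (Irate : E → ENNReal) (θ0 : E) : Prop :=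
  ∀ G : Set E, IsOpen G →
    -(((⨅ ϑ ∈ G, Irate ϑ) : ENNReal) : EReal) ≤
      Filter.liminf
        (fun T => (((b T)⁻¹ : ℝ) : EReal) *
          ENNReal.log (P {ω | a T • (θhat T ω - θ0) ∈ G})) atTop

/-- LDP upper bound at `θ0` for the family `a_T (θ̂_T − θ0)` with speed `b_T`:
for every closed `F ⊆ E`,
`limsup_{T→∞} (1/b_T) log P(a_T(θ̂_T − θ0) ∈ F) ≤ − inf_{ϑ ∈ F} I(ϑ)`. -/
def LDPUpperAt (P : Measure Ω) (θhat : ℝ → Ω → E) (a b : ℝ → ℝ)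
    (Irate : E → ENNReal) (θ0 : E) : Prop :=
  ∀ F : Set E, IsClosed F →
    Filter.limsup
      (fun T => (((b T)⁻¹ : ℝ) : EReal) *
        ENNReal.log (P {ω | a T • (θhat T ω - θ0) ∈ F})) atTop ≤
      -(((⨅ ϑ ∈ F, Irate ϑ) : ENNReal) : EReal)

/-- Extended-real valued upper confidence bound
`J̄^δ_{T,r}(θ') = sup {J(θ) : θ ∈ Θ, a_T (θ' - θ) ∈ S^δ_{θ,r}}`. -/
def upperCBE (Θ : Set E) (I : E → E → ENNReal) (J : E → ℝ) (r δ : ℝ) (a : ℝ → ℝ)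
    (T : ℝ) (θ' : E) : EReal :=
  sSup ((fun θ => (J θ : EReal)) '' {θ : E | θ ∈ Θ ∧ a T • (θ' - θ) ∈ fatSublevel I θ r δ})

/-- Extended-real valued lower confidence bound
`J̲^δ_{T,r}(θ') = inf {J(θ) : θ ∈ Θ, a_T (θ' - θ) ∈ S^δ_{θ,r}}`. -/
def lowerCBE (Θ : Set E) (I : E → E → ENNReal) (J : E → ℝ) (r δ : ℝ) (a : ℝ → ℝ)
    (T : ℝ) (θ' : E) : EReal :=
  sInf ((fun θ => (J θ : EReal)) '' {θ : E | θ ∈ Θ ∧ a T • (θ' - θ) ∈ fatSublevel I θ r δ})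

/-! If `a_T (θ̂_T - θ0)` lies in the fattened sublevel set `S^δ_{θ0,r}`, then `θ0` itself is one
of the parameters over which `J̄` and `J̲` are taken, so `J̲ ≤ J(θ0) ≤ J̄`. Hence each error event
forces `a_T (θ̂_T - θ0)` into the closure of the complement of `S^δ_{θ0,r}`, a closed set on which
`I_{θ0} ≥ r` (for `δ > 0` because the fattening is open and contains `S_{θ0,r}`, for `δ = 0` by
continuity of `I_{θ0}`), and the LDP upper bound gives the rate `-r`. -/

section FatSublevel

variable {X : Type*} [NormedAddCommGroup X] (I : X → X → ENNReal) (θ : X) (r : ℝ)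

theorem isOpen_fatSublevel {δ : ℝ} (hδ : δ ≠ 0) : IsOpen (fatSublevel I θ r δ) := by
  rw [fatSublevel, if_neg hδ]
  exact isOpen_biUnion fun _ _ => isOpen_ball

theorem sublevelSet_subset_fatSublevel {δ : ℝ} (hδ : 0 ≤ δ) :
    sublevelSet I θ r ⊆ fatSublevel I θ r δ := by
  unfold fatSublevel
  split_ifs with h
  · exact subset_rfl
  · exact fun ϑ hϑ => mem_biUnion hϑ (mem_ball_self (lt_of_le_of_ne hδ (Ne.symm h)))

theorem compl_fatSublevel_subset {δ : ℝ} (hδ : 0 ≤ δ) :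
    (fatSublevel I θ r δ)ᶜ ⊆ {ϑ | ENNReal.ofReal r < I θ ϑ} := fun ϑ hϑ =>
  show ENNReal.ofReal r < I θ ϑ from
    not_le.mp fun h => hϑ (sublevelSet_subset_fatSublevel I θ r hδ h)

theorem closure_compl_fatSublevel_subset {δ : ℝ}
    (hδ : 0 < δ ∨ (δ = 0 ∧ Continuous (fun ϑ => I θ ϑ))) :
    closure (fatSublevel I θ r δ)ᶜ ⊆ {ϑ | ENNReal.ofReal r ≤ I θ ϑ} := by
  have hlt_le : {ϑ | ENNReal.ofReal r < I θ ϑ} ⊆ {ϑ | ENNReal.ofReal r ≤ I θ ϑ} :=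
    ofPred_subset_ofPred.mpr fun _ => le_of_lt
  rcases hδ with hδ | ⟨rfl, hcont⟩
  · rw [(isOpen_fatSublevel I θ r hδ.ne').isClosed_compl.closure_eq]
    exact (compl_fatSublevel_subset I θ r hδ.le).trans hlt_le
  · exact closure_minimal ((compl_fatSublevel_subset I θ r le_rfl).trans hlt_le)
      (isClosed_le continuous_const hcont)

end FatSublevel

theorem lowerCBE_le_and_le_upperCBE {Θ : Set E} {I : E → E → ENNReal} (J : E → ℝ) {r δ : ℝ}
    {a : ℝ → ℝ} (T : ℝ) {θ' θ0 : E} (hθ0 : θ0 ∈ Θ)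
    (hmem : a T • (θ' - θ0) ∈ fatSublevel I θ0 r δ) :
    lowerCBE Θ I J r δ a T θ' ≤ (J θ0 : EReal) ∧ (J θ0 : EReal) ≤ upperCBE Θ I J r δ a T θ' :=
  ⟨sInf_le ⟨θ0, ⟨hθ0, hmem⟩, rfl⟩, le_sSup ⟨θ0, ⟨hθ0, hmem⟩, rfl⟩⟩

theorem EReal.mul_log_le_mul_log {c : ℝ} (hc : 0 ≤ c) {x y : ENNReal} (hxy : x ≤ y) :
    (c : EReal) * ENNReal.log x ≤ (c : EReal) * ENNReal.log y :=
  mul_le_mul_of_nonneg_left (ENNReal.log_monotone hxy) (EReal.coe_nonneg.mpr hc)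

theorem LDPUpperAt.limsup_le_of_subset {P : Measure Ω} {θhat : ℝ → Ω → E} {a b : ℝ → ℝ}
    {Irate : E → ENNReal} {θ0 : E} (hLDP : LDPUpperAt P θhat a b Irate θ0)
    (hb : ∀ T, 0 ≤ b T) {F : Set E} (hF : IsClosed F) {r : ℝ} (hr : 0 ≤ r)
    (hrate : ∀ ϑ ∈ F, ENNReal.ofReal r ≤ Irate ϑ) {S : ℝ → Set Ω}
    (hS : ∀ T, S T ⊆ {ω | a T • (θhat T ω - θ0) ∈ F}) :
    limsup (fun T => (((b T)⁻¹ : ℝ) : EReal) * ENNReal.log (P (S T))) atTop ≤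
      ((-r : ℝ) : EReal) :=
  calc limsup (fun T => (((b T)⁻¹ : ℝ) : EReal) * ENNReal.log (P (S T))) atTop
      ≤ limsup (fun T => (((b T)⁻¹ : ℝ) : EReal) *
          ENNReal.log (P {ω | a T • (θhat T ω - θ0) ∈ F})) atTop :=
        limsup_le_limsup <| Eventually.of_forall fun T =>
          EReal.mul_log_le_mul_log (inv_nonneg.mpr (hb T)) (measure_mono (hS T))
    _ ≤ -(((⨅ ϑ ∈ F, Irate ϑ) : ENNReal) : EReal) := hLDP F hF
    _ ≤ ((-r : ℝ) : EReal) := by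
        rw [EReal.coe_neg, EReal.neg_le_neg_iff, ← max_eq_left hr, ← EReal.coe_ennreal_ofReal]
        exact_mod_cast le_iInf₂ hrate

theorem stmt8_general (Θ : Set E) (I : E → E → ENNReal) (J : E → ℝ)
    (P : E → Measure Ω)
    (θhat : ℝ → Ω → E)
    (b a : ℝ → ℝ) (hbpos : ∀ T, 0 < b T)
    (r δ : ℝ) (hr : 0 < r)
    (θ0 : E) (hθ0 : θ0 ∈ Θ)
    (hδ : 0 < δ ∨ (δ = 0 ∧ Continuous (fun ϑ => I θ0 ϑ)))
    (hLDPup : LDPUpperAt (P θ0) θhat a b (I θ0) θ0) :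
    Filter.limsup
        (fun T => (((b T)⁻¹ : ℝ) : EReal) *
          ENNReal.log (P θ0 {ω | upperCBE Θ I J r δ a T (θhat T ω) < (J θ0 : EReal)}))
        atTop ≤ ((-r : ℝ) : EReal) ∧
    Filter.limsup
        (fun T => (((b T)⁻¹ : ℝ) : EReal) *
          ENNReal.log (P θ0 {ω | (J θ0 : EReal) < lowerCBE Θ I J r δ a T (θhat T ω)}))
        atTop ≤ ((-r : ℝ) : EReal) ∧
    Filter.limsup
        (fun T => (((b T)⁻¹ : ℝ) : EReal) *
          ENNReal.log (P θ0 {ω | ¬(lowerCBE Θ I J r δ a T (θhat T ω) ≤ (J θ0 : EReal) ∧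
            (J θ0 : EReal) ≤ upperCBE Θ I J r δ a T (θhat T ω))}))
        atTop ≤ ((-r : ℝ) : EReal) := by
  have hbound : ∀ S : ℝ → Set Ω,
      (∀ T, S T ⊆ {ω | a T • (θhat T ω - θ0) ∉ fatSublevel I θ0 r δ}) →
      limsup (fun T => (((b T)⁻¹ : ℝ) : EReal) * ENNReal.log (P θ0 (S T))) atTop ≤
        ((-r : ℝ) : EReal) := fun S hS =>
    hLDPup.limsup_le_of_subset (fun T => (hbpos T).le) isClosed_closure hr.le
      (closure_compl_fatSublevel_subset I θ0 r hδ) fun T => (hS T).trans fun _ h => subset_closure h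
  refine ⟨hbound _ ?_, hbound _ ?_, hbound _ ?_⟩ <;> intro T ω hω hmem
  · exact (lowerCBE_le_and_le_upperCBE J T hθ0 hmem).2.not_gt hω
  · exact (lowerCBE_le_and_le_upperCBE J T hθ0 hmem).1.not_gt hω
  · exact hω (lowerCBE_le_and_le_upperCBE J T hθ0 hmem)

/-- exponential accuracy of the optimal interval: under the LDP upper bound
at `θ0`, both one-sided error probabilities decay with exponential rate `r` and speed
`b_T`, and consequently so does the two-sided error probability; this holds for `δ > 0`,
and also for `δ = 0` if `I_{θ0}` is continuous. -/
theorem stmt8 (Θ : Set E) (hΘ : Θ.Nonempty) (I : E → E → ENNReal) (J : E → ℝ)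
    [MeasurableSpace E] [BorelSpace E]
    (P : E → Measure Ω) (hP : ∀ θ, IsProbabilityMeasure (P θ))
    (θhat : ℝ → Ω → E) (hθhatmeas : ∀ T, Measurable (θhat T))
    (b a : ℝ → ℝ) (hbpos : ∀ T, 0 < b T) (hbtop : Tendsto b atTop atTop)
    (hadef : ∀ T, a T = Real.sqrt (T / b T)) (hatop : Tendsto a atTop atTop)
    (r δ : ℝ) (hr : 0 < r)
    (θ0 : E) (hθ0 : θ0 ∈ Θ)
    (hδ : 0 < δ ∨ (δ = 0 ∧ Continuous (fun ϑ => I θ0 ϑ)))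
    (hLDPup : LDPUpperAt (P θ0) θhat a b (I θ0) θ0)
    (hmeasU : ∀ T, Measurable (upperCBE Θ I J r δ a T))
    (hmeasL : ∀ T, Measurable (lowerCBE Θ I J r δ a T)) :
    Filter.limsup
        (fun T => (((b T)⁻¹ : ℝ) : EReal) *
          ENNReal.log (P θ0 {ω | upperCBE Θ I J r δ a T (θhat T ω) < (J θ0 : EReal)}))
        atTop ≤ ((-r : ℝ) : EReal) ∧
    Filter.limsup
        (fun T => (((b T)⁻¹ : ℝ) : EReal) *
          ENNReal.log (P θ0 {ω | (J θ0 : EReal) < lowerCBE Θ I J r δ a T (θhat T ω)}))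
        atTop ≤ ((-r : ℝ) : EReal) ∧
    Filter.limsup
        (fun T => (((b T)⁻¹ : ℝ) : EReal) *
          ENNReal.log (P θ0 {ω | ¬(lowerCBE Θ I J r δ a T (θhat T ω) ≤ (J θ0 : EReal) ∧
            (J θ0 : EReal) ≤ upperCBE Θ I J r δ a T (θhat T ω))}))
        atTop ≤ ((-r : ℝ) : EReal) :=
  stmt8_general Θ I J P θhat b a hbpos r δ hr θ0 hθ0 hδ hLDPup
end
end

section
/- Strong consistency of the optimal interval: Suppose the rate-function family satisfies the growth conditions (G1) and (G2), I_θ(0) = 0 for all θ ∈ Θ, J : Θ → ℝ is uniformly continuous on bounded subsets of Θ, and either Θ is open in E or θ̂_T takes values in Θ for all T > 0. Fix r > 0, δ > 0 and θ0 ∈ Θ, and suppose θ̂_T → θ0 P_{θ0}-almost surely as T → ∞. Then J̄^δ_{T,r}(θ̂_T) → J(θ0) and J̲^δ_{T,r}(θ̂_T) → J(θ0) P_{θ0}-almost surely as T → ∞. -/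
set_option autoImplicit false

open Filter Topology Metric Set MeasureTheory

noncomputable section

variable {E : Type*} [NormedAddCommGroup E] [NormedSpace ℝ E]

variable {Ω : Type*} [MeasurableSpace Ω]

/-!
If `a_T (θ' - θ)` lies in the fattened sublevel set while `‖θ' - θ‖ ≥ ε` along a sequence
`T_n → ∞` with `θ'` bounded, then the centres `ϑ_n` of the fattening have bounded rate but grow
faster than `max 1 ‖θ_n‖`, which (G1) and (G2) forbid. So the confidence set around `θ̂_T`
shrinks to `θ0` as `θ̂_T → θ0`; it contains `θ̂_T` itself because `I_θ(0) = 0`, so by continuity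
of `J` at `θ0` both the supremum and the infimum of `J` over it converge to `J θ0`.
-/

def confidenceSet (Θ : Set E) (I : E → E → ENNReal) (r δ c : ℝ) (θ' : E) : Set E :=
  {θ : E | θ ∈ Θ ∧ c • (θ' - θ) ∈ fatSublevel I θ r δ}

omit [NormedSpace ℝ E] in
theorem mem_fatSublevel_iff {I : E → E → ENNReal} {θ x : E} {r δ : ℝ} (hδ : δ ≠ 0) :
    x ∈ fatSublevel I θ r δ ↔ ∃ ϑ, I θ ϑ ≤ ENNReal.ofReal r ∧ dist x ϑ < δ := by
  simp [fatSublevel, hδ, sublevelSet]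

theorem self_mem_confidenceSet {Θ : Set E} {I : E → E → ENNReal} {r δ c : ℝ} {θ : E}
    (hθ : θ ∈ Θ) (hI : I θ 0 = 0) (hδ : 0 < δ) : θ ∈ confidenceSet Θ I r δ c θ := by
  refine ⟨hθ, (mem_fatSublevel_iff hδ.ne').2 ⟨0, by simp [hI], ?_⟩⟩
  simpa using hδ

theorem le_norm_div_max_one_norm {θ θ' ϑ : E} {c R ε δ : ℝ} (hc : 0 ≤ c) (hδ : 0 < δ)
    (hε : 0 < ε) (hθ' : ‖θ'‖ ≤ R) (hεθ : ε ≤ ‖θ' - θ‖) (hϑ : dist (c • (θ' - θ)) ϑ < δ) :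
    c / (1 + (R + 1) / ε) - δ ≤ ‖ϑ‖ / max 1 ‖θ‖ := by
  set d := ‖θ' - θ‖
  set K := 1 + (R + 1) / ε
  have hR : 0 ≤ R := (norm_nonneg _).trans hθ'
  have hK : 0 < K := by positivity
  have hMK : max 1 ‖θ‖ ≤ K * d := by
    have hdε : R + 1 ≤ (R + 1) * (d / ε) :=
      le_mul_of_one_le_right (by linarith) ((one_le_div hε).2 hεθ)
    have hKd : K * d = d + (R + 1) * (d / ε) := by ring
    have hθ : ‖θ‖ ≤ R + d := by
      calc ‖θ‖ ≤ ‖θ'‖ + ‖θ - θ'‖ := norm_le_norm_add_norm_sub' _ _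
        _ ≤ R + d := by rw [norm_sub_rev]; linarith
    rw [max_le_iff]
    constructor <;> linarith [norm_nonneg (θ' - θ)]
  have hϑd : c * d - δ ≤ ‖ϑ‖ := by
    have h := norm_sub_norm_le (c • (θ' - θ)) ϑ
    rw [← dist_eq_norm, norm_smul, Real.norm_of_nonneg hc] at h
    linarith
  have hM : 1 ≤ max 1 ‖θ‖ := le_max_left _ _
  rw [le_div_iff₀ (by linarith)]
  calc (c / K - δ) * max 1 ‖θ‖ = c / K * max 1 ‖θ‖ - δ * max 1 ‖θ‖ := by ring
    _ ≤ c / K * (K * d) - δ * 1 := by gcongr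
    _ = c * d - δ := by field_simp
    _ ≤ ‖ϑ‖ := hϑd

omit [NormedSpace ℝ E] in
theorem limsup_rate_eq_top {Θ : Set E} {I : E → E → ENNReal} (hG1 : GrowthG1 Θ I)
    (hG2 : GrowthG2 Θ I) {θs ϑs : ℕ → E} (hθs : ∀ n, θs n ∈ Θ)
    (hϑs : Tendsto (fun n => ‖ϑs n‖ / max 1 ‖θs n‖) atTop atTop) :
    limsup (fun n => I (θs n) (ϑs n)) atTop = ⊤ := by
  by_cases hθ : Tendsto (fun n => ‖θs n‖) atTop atTop
  · refine hG2 θs ϑs hθs hθ (tendsto_atTop_mono' atTop ?_ hϑs)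
    filter_upwards [hθ.eventually_ge_atTop 1] with n hn
    rw [max_eq_right hn]
  · obtain ⟨C, hC⟩ : ∃ C, ∃ᶠ n in atTop, ‖θs n‖ < C := by
      simpa only [Filter.tendsto_atTop, not_forall, not_eventually, not_le] using hθ
    obtain ⟨φ, hφ, hφC⟩ := extraction_of_frequently_atTop hC
    have hϑφ : Tendsto (fun k => ‖ϑs (φ k)‖) atTop atTop :=
      tendsto_atTop_mono (fun k => div_le_self (norm_nonneg _) (le_max_left _ _))
        (hϑs.comp hφ.tendsto_atTop)
    have hIφ := hG1 (θs ∘ φ) (ϑs ∘ φ) (fun k => hθs _) ⟨C, fun k => (hφC k).le⟩ hϑφ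
    refine top_unique ?_
    calc ⊤ = limsup ((fun n => I (θs n) (ϑs n)) ∘ φ) atTop := hIφ.limsup_eq.symm
      _ = limsup (fun n => I (θs n) (ϑs n)) (map φ atTop) := limsup_comp _ _ _
      _ ≤ _ := limsup_le_limsup_of_le hφ.tendsto_atTop

theorem eventually_confidenceSet_subset_ball {Θ : Set E} {I : E → E → ENNReal}
    (hG1 : GrowthG1 Θ I) (hG2 : GrowthG2 Θ I) {r δ : ℝ} (hδ : 0 < δ) (R : ℝ) {ε : ℝ}
    (hε : 0 < ε) :
    ∀ᶠ c in atTop, ∀ θ', ‖θ'‖ ≤ R → confidenceSet Θ I r δ c θ' ⊆ ball θ' ε := by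
  by_contra h
  rw [not_eventually, frequently_atTop] at h
  choose c hc θ' hθ'R θ hθ hθε using fun n : ℕ => by
    simpa only [not_forall, not_subset, exists_prop] using h n
  have hθΘ : ∀ n, θ n ∈ Θ := fun n => (hθ n).1
  choose ϑ hϑr hϑ using fun n => (mem_fatSublevel_iff hδ.ne').1 (hθ n).2
  have hεθ : ∀ n, ε ≤ ‖θ' n - θ n‖ := fun n => by
    simpa [mem_ball, dist_eq_norm', not_lt] using hθε n
  have hc0 : ∀ n, 0 ≤ c n := fun n => (Nat.cast_nonneg n).trans (hc n)
  have hR : 0 ≤ R := (norm_nonneg _).trans (hθ'R 0)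
  have hratio : Tendsto (fun n => ‖ϑ n‖ / max 1 ‖θ n‖) atTop atTop := by
    refine tendsto_atTop_mono
      (fun n => le_norm_div_max_one_norm (hc0 n) hδ hε (hθ'R n) (hεθ n) (hϑ n)) ?_
    exact tendsto_atTop_add_const_right _ _
      ((tendsto_atTop_mono hc tendsto_natCast_atTop_atTop).atTop_div_const (by positivity))
  have hle : limsup (fun n => I (θ n) (ϑ n)) atTop ≤ ENNReal.ofReal r :=
    limsup_le_of_le (by isBoundedDefault) (Eventually.of_forall hϑr)
  rw [limsup_rate_eq_top hG1 hG2 hθΘ hratio, top_le_iff] at hle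
  exact ENNReal.ofReal_ne_top hle

theorem tendsto_confidenceSet_smallSets {Θ : Set E} {I : E → E → ENNReal}
    (hG1 : GrowthG1 Θ I) (hG2 : GrowthG2 Θ I) {r δ : ℝ} (hδ : 0 < δ) {ι : Type*}
    {l : Filter ι} {c : ι → ℝ} (hc : Tendsto c l atTop) {θ' : ι → E} {θ0 : E}
    (hθ' : Tendsto θ' l (𝓝 θ0)) :
    Tendsto (fun t => confidenceSet Θ I r δ (c t) (θ' t)) l (𝓝[Θ] θ0).smallSets := by
  refine nhdsWithin_basis_ball.smallSets.tendsto_right_iff.2 fun ε hε => ?_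
  filter_upwards [hc.eventually (eventually_confidenceSet_subset_ball (r := r) hG1 hG2 hδ
      (‖θ0‖ + ε / 2) (half_pos hε)), hθ' (ball_mem_nhds θ0 (half_pos hε))] with t hsub hθ't
  have hθ't : dist (θ' t) θ0 < ε / 2 := hθ't
  have hθ'R : ‖θ' t‖ ≤ ‖θ0‖ + ε / 2 := by
    have := norm_le_norm_add_norm_sub' (θ' t) θ0
    rw [dist_eq_norm] at hθ't
    linarith
  intro θ hθ
  have hθθ' : dist θ (θ' t) < ε / 2 := hsub (θ' t) hθ'R hθ
  refine ⟨?_, hθ.1⟩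
  calc dist θ θ0 ≤ dist θ (θ' t) + dist (θ' t) θ0 := dist_triangle _ _ _
    _ < ε / 2 + ε / 2 := add_lt_add hθθ' hθ't
    _ = ε := add_halves ε

theorem tendsto_csSup_of_tendsto_smallSets {ι : Type*} {l : Filter ι} {A : ι → Set ℝ} {x : ℝ}
    (hA : Tendsto A l (𝓝 x).smallSets) (hne : ∀ᶠ t in l, (A t).Nonempty) :
    Tendsto (fun t => sSup (A t)) l (𝓝 x) := by
  refine nhds_basis_closedBall.tendsto_right_iff.2 fun ε hε => ?_
  filter_upwards [tendsto_smallSets_iff.1 hA _ (closedBall_mem_nhds x hε), hne] with t hsub hne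
  exact isClosed_closedBall.closure_subset_iff.2 hsub
    (csSup_mem_closure hne (isBounded_closedBall.subset hsub).bddAbove)

theorem tendsto_csInf_of_tendsto_smallSets {ι : Type*} {l : Filter ι} {A : ι → Set ℝ} {x : ℝ}
    (hA : Tendsto A l (𝓝 x).smallSets) (hne : ∀ᶠ t in l, (A t).Nonempty) :
    Tendsto (fun t => sInf (A t)) l (𝓝 x) := by
  refine nhds_basis_closedBall.tendsto_right_iff.2 fun ε hε => ?_
  filter_upwards [tendsto_smallSets_iff.1 hA _ (closedBall_mem_nhds x hε), hne] with t hsub hne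
  exact isClosed_closedBall.closure_subset_iff.2 hsub
    (csInf_mem_closure hne (isBounded_closedBall.subset hsub).bddBelow)

theorem stmt12_general (Θ : Set E) (I : E → E → ENNReal) (J : E → ℝ)
    (P : E → Measure Ω)
    (θhat : ℝ → Ω → E)
    (a : ℝ → ℝ) (hatop : Tendsto a atTop atTop)
    (hG1 : GrowthG1 Θ I) (hG2 : GrowthG2 Θ I)
    (hI0 : ∀ θ ∈ Θ, I θ 0 = 0)
    (hJ : ∀ a0 > (0 : ℝ), ∀ θ0 ∈ Θ, UniformContinuousOn J (Metric.closedBall θ0 a0 ∩ Θ))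
    (hdom : IsOpen Θ ∨ ∀ T > (0 : ℝ), ∀ ω : Ω, θhat T ω ∈ Θ)
    (r δ : ℝ) (hδ : 0 < δ)
    (θ0 : E) (hθ0 : θ0 ∈ Θ)
    (hcons : ∀ᵐ ω ∂(P θ0), Tendsto (fun T => θhat T ω) atTop (nhds θ0)) :
    ∀ᵐ ω ∂(P θ0),
      Tendsto (fun T => upperCB Θ I J r δ a T (θhat T ω)) atTop (nhds (J θ0)) ∧
      Tendsto (fun T => lowerCB Θ I J r δ a T (θhat T ω)) atTop (nhds (J θ0)) := by
  filter_upwards [hcons] with ω hω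
  have hJθ0 : ContinuousWithinAt J Θ θ0 :=
    ((hJ 1 one_pos θ0 hθ0).continuousOn θ0
      ⟨mem_closedBall_self zero_le_one, hθ0⟩).mono_of_mem_nhdsWithin
      (inter_mem (mem_nhdsWithin_of_mem_nhds (closedBall_mem_nhds θ0 one_pos))
        self_mem_nhdsWithin)
  have hθhat : ∀ᶠ T in atTop, θhat T ω ∈ Θ := by
    rcases hdom with hopen | hvalued
    · exact hω (hopen.mem_nhds hθ0)
    · exact (eventually_gt_atTop 0).mono fun T hT => hvalued T hT ω
  have hne : ∀ᶠ T in atTop, (J '' confidenceSet Θ I r δ (a T) (θhat T ω)).Nonempty :=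
    hθhat.mono fun T hT => ⟨_, mem_image_of_mem J (self_mem_confidenceSet hT (hI0 _ hT) hδ)⟩
  have hsets : Tendsto (fun T => J '' confidenceSet Θ I r δ (a T) (θhat T ω)) atTop
      (𝓝 (J θ0)).smallSets :=
    hJθ0.tendsto.image_smallSets.comp (tendsto_confidenceSet_smallSets hG1 hG2 hδ hatop hω)
  exact ⟨tendsto_csSup_of_tendsto_smallSets hsets hne,
    tendsto_csInf_of_tendsto_smallSets hsets hne⟩

/-- strong consistency of the optimal interval: if `θ̂_T → θ0`
`P_{θ0}`-a.s., then `J̄^δ_{T,r}(θ̂_T) → J(θ0)` and `J̲^δ_{T,r}(θ̂_T) → J(θ0)`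
`P_{θ0}`-a.s. -/
theorem stmt12 (Θ : Set E) (hΘ : Θ.Nonempty) (I : E → E → ENNReal) (J : E → ℝ)
    [MeasurableSpace E] [BorelSpace E]
    (P : E → Measure Ω) (hP : ∀ θ, IsProbabilityMeasure (P θ))
    (θhat : ℝ → Ω → E) (hθhatmeas : ∀ T, Measurable (θhat T))
    (b a : ℝ → ℝ) (hbpos : ∀ T, 0 < b T) (hbtop : Tendsto b atTop atTop)
    (hadef : ∀ T, a T = Real.sqrt (T / b T)) (hatop : Tendsto a atTop atTop)
    (hG1 : GrowthG1 Θ I) (hG2 : GrowthG2 Θ I)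
    (hI0 : ∀ θ ∈ Θ, I θ 0 = 0)
    (hJ : ∀ a0 > (0 : ℝ), ∀ θ0 ∈ Θ, UniformContinuousOn J (Metric.closedBall θ0 a0 ∩ Θ))
    (hdom : IsOpen Θ ∨ ∀ T > (0 : ℝ), ∀ ω : Ω, θhat T ω ∈ Θ)
    (r δ : ℝ) (hr : 0 < r) (hδ : 0 < δ)
    (θ0 : E) (hθ0 : θ0 ∈ Θ)
    (hcons : ∀ᵐ ω ∂(P θ0), Tendsto (fun T => θhat T ω) atTop (nhds θ0)) :
    ∀ᵐ ω ∂(P θ0),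
      Tendsto (fun T => upperCB Θ I J r δ a T (θhat T ω)) atTop (nhds (J θ0)) ∧
      Tendsto (fun T => lowerCB Θ I J r δ a T (θhat T ω)) atTop (nhds (J θ0)) :=
  stmt12_general Θ I J P θhat a hatop hG1 hG2 hI0 hJ hdom r δ hδ θ0 hθ0 hcons
end
end

section
/- Closed form of the Ornstein–Uhlenbeck upper confidence bound: For all real numbers θ' > 0 and ρ > 0, sup{1/(2θ) : θ > 0, (θ' − θ)²/(2θ) ≤ ρ} = 1/(2θ') + (ρ + √(ρ² + 2θ'ρ))/(2θ'²), and the supremum is attained at θ = θ' + ρ − √(ρ² + 2θ'ρ) > 0. -/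
/-!
The constraint `(θ' - θ)² ≤ 2ρθ` says that `θ` lies between the two roots `θ' + ρ ± √(ρ² + 2θ'ρ)`
of `θ² - 2(θ' + ρ)θ + θ'²`, so `1/(2θ)` is largest at the smaller root. That root is positive, and
since the product of the roots is `θ'²`, its reciprocal is `(θ' + ρ + √(ρ² + 2θ'ρ))/θ'²`.
-/

/-- The smaller root of `θ² - 2(θ' + ρ)θ + θ'²`. -/
noncomputable def ouLowerRoot (θ' ρ : ℝ) : ℝ :=
  θ' + ρ - √(ρ ^ 2 + 2 * θ' * ρ)

section

variable {θ' ρ : ℝ}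

theorem ouLowerRoot_mul_add_sqrt (hd : 0 ≤ ρ ^ 2 + 2 * θ' * ρ) :
    ouLowerRoot θ' ρ * (θ' + ρ + √(ρ ^ 2 + 2 * θ' * ρ)) = θ' ^ 2 := by
  have hs := Real.sq_sqrt hd
  unfold ouLowerRoot
  linear_combination -hs

theorem ouLowerRoot_pos (hθ' : 0 < θ') (hρ : 0 ≤ ρ) : 0 < ouLowerRoot θ' ρ := by
  have hlt : √(ρ ^ 2 + 2 * θ' * ρ) < θ' + ρ :=
    (Real.sqrt_lt' (by positivity)).2 (by nlinarith)
  unfold ouLowerRoot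
  linarith

theorem sq_sub_ouLowerRoot (hd : 0 ≤ ρ ^ 2 + 2 * θ' * ρ) :
    (θ' - ouLowerRoot θ' ρ) ^ 2 = 2 * ρ * ouLowerRoot θ' ρ := by
  have hs := Real.sq_sqrt hd
  unfold ouLowerRoot
  linear_combination hs

theorem ouLowerRoot_le_of_sq_sub_le {θ : ℝ} (h : (θ' - θ) ^ 2 ≤ 2 * ρ * θ) :
    ouLowerRoot θ' ρ ≤ θ := by
  have habs : |θ - (θ' + ρ)| ≤ √(ρ ^ 2 + 2 * θ' * ρ) := Real.abs_le_sqrt (by nlinarith)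
  unfold ouLowerRoot
  linarith [neg_abs_le (θ - (θ' + ρ))]

theorem one_div_two_mul_ouLowerRoot (hθ' : θ' ≠ 0) (hd : 0 ≤ ρ ^ 2 + 2 * θ' * ρ) :
    1 / (2 * ouLowerRoot θ' ρ) = 1 / (2 * θ') + (ρ + √(ρ ^ 2 + 2 * θ' * ρ)) / (2 * θ' ^ 2) := by
  have hprod := ouLowerRoot_mul_add_sqrt hd
  have hr : ouLowerRoot θ' ρ ≠ 0 := by
    rintro h
    rw [h, zero_mul] at hprod
    exact hθ' (pow_eq_zero_iff two_ne_zero |>.1 hprod.symm)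
  generalize √(ρ ^ 2 + 2 * θ' * ρ) = s at hprod ⊢
  field_simp
  linear_combination -hprod

end

/-- closed form of the Ornstein–Uhlenbeck upper confidence bound:
for `θ' > 0` and `ρ > 0`,
`sup {1/(2θ) : θ > 0, (θ' − θ)²/(2θ) ≤ ρ} = 1/(2θ') + (ρ + √(ρ² + 2θ'ρ))/(2θ'²)`,
the supremum being attained at `θ = θ' + ρ − √(ρ² + 2θ'ρ) > 0`. -/
theorem stmt17 (θ' ρ : ℝ) (hθ' : 0 < θ') (hρ : 0 < ρ) :
    IsGreatest {y : ℝ | ∃ θ : ℝ, 0 < θ ∧ (θ' - θ) ^ 2 / (2 * θ) ≤ ρ ∧ y = 1 / (2 * θ)}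
      (1 / (2 * θ') + (ρ + Real.sqrt (ρ ^ 2 + 2 * θ' * ρ)) / (2 * θ' ^ 2)) ∧
    (0 < θ' + ρ - Real.sqrt (ρ ^ 2 + 2 * θ' * ρ) ∧
      (θ' - (θ' + ρ - Real.sqrt (ρ ^ 2 + 2 * θ' * ρ))) ^ 2 /
          (2 * (θ' + ρ - Real.sqrt (ρ ^ 2 + 2 * θ' * ρ))) ≤ ρ ∧
      1 / (2 * (θ' + ρ - Real.sqrt (ρ ^ 2 + 2 * θ' * ρ))) =
        1 / (2 * θ') + (ρ + Real.sqrt (ρ ^ 2 + 2 * θ' * ρ)) / (2 * θ' ^ 2)) := by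
  have hd : 0 ≤ ρ ^ 2 + 2 * θ' * ρ := by positivity
  have hpos : 0 < ouLowerRoot θ' ρ := ouLowerRoot_pos hθ' hρ.le
  have hcon : (θ' - ouLowerRoot θ' ρ) ^ 2 / (2 * ouLowerRoot θ' ρ) ≤ ρ := by
    rw [sq_sub_ouLowerRoot hd, mul_right_comm, mul_div_cancel_left₀ ρ (by positivity)]
  have hval := one_div_two_mul_ouLowerRoot hθ'.ne' hd
  refine ⟨⟨⟨_, hpos, hcon, hval.symm⟩, ?_⟩, hpos, hcon, hval⟩
  rintro _ ⟨θ, hθ, hc, rfl⟩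
  rw [div_le_iff₀ (by positivity)] at hc
  have hle : ouLowerRoot θ' ρ ≤ θ := ouLowerRoot_le_of_sq_sub_le (by linarith)
  rw [← hval]
  exact one_div_le_one_div_of_le (by positivity) (by linarith)
end

section
/- Closed form of the Ornstein–Uhlenbeck lower confidence bound: For all real numbers θ' > 0 and ρ > 0, inf{1/(2θ) : θ > 0, (θ' − θ)²/(2θ) ≤ ρ} = 1/(2θ') + (ρ − √(ρ² + 2θ'ρ))/(2θ'²), and the infimum is attained at θ = θ' + ρ + √(ρ² + 2θ'ρ). -/
/-!
Completing the square, the constraint `(θ' - θ)² / (2θ) ≤ ρ` on `θ > 0` says that `θ` lies between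
the roots `θ' + ρ ± √(ρ² + 2θ'ρ)` of `θ² - 2(θ' + ρ)θ + θ'²`, so `1/(2θ)` is least at the upper
root. By Vieta the product of the roots is `θ'²`, hence `1/(2θ₊) = θ₋/(2θ'²)`, which is the closed form.
-/

lemma sq_sub_div_two_mul_le_iff {θ' ρ θ : ℝ} (hθ : 0 < θ) :
    (θ' - θ) ^ 2 / (2 * θ) ≤ ρ ↔ (θ - (θ' + ρ)) ^ 2 ≤ ρ ^ 2 + 2 * θ' * ρ := by
  rw [div_le_iff₀ (by positivity)]
  constructor <;> intro h <;> linarith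

lemma le_add_sqrt_of_sq_sub_le {x c d : ℝ} (h : (x - c) ^ 2 ≤ d) : x ≤ c + √d := by
  linarith [le_abs_self (x - c), Real.abs_le_sqrt h]

lemma one_div_two_mul_add_add_sqrt {θ' ρ : ℝ} (hθ' : 0 < θ') (hρ : 0 ≤ ρ) :
    1 / (2 * (θ' + ρ + √(ρ ^ 2 + 2 * θ' * ρ))) =
      1 / (2 * θ') + (ρ - √(ρ ^ 2 + 2 * θ' * ρ)) / (2 * θ' ^ 2) := by
  set s := √(ρ ^ 2 + 2 * θ' * ρ)
  have vieta : (θ' + ρ + s) * (θ' + ρ - s) = θ' ^ 2 := by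
    linear_combination (-1 : ℝ) * Real.sq_sqrt (by positivity : 0 ≤ ρ ^ 2 + 2 * θ' * ρ)
  have hpos : 0 < θ' + ρ + s := by positivity
  field_simp
  linear_combination (-1 : ℝ) * vieta

/-- closed form of the Ornstein–Uhlenbeck lower confidence bound:
for `θ' > 0` and `ρ > 0`,
`inf {1/(2θ) : θ > 0, (θ' − θ)²/(2θ) ≤ ρ} = 1/(2θ') + (ρ − √(ρ² + 2θ'ρ))/(2θ'²)`,
the infimum being attained at `θ = θ' + ρ + √(ρ² + 2θ'ρ)`. -/
theorem stmt18 (θ' ρ : ℝ) (hθ' : 0 < θ') (hρ : 0 < ρ) :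
    IsLeast {y : ℝ | ∃ θ : ℝ, 0 < θ ∧ (θ' - θ) ^ 2 / (2 * θ) ≤ ρ ∧ y = 1 / (2 * θ)}
      (1 / (2 * θ') + (ρ - Real.sqrt (ρ ^ 2 + 2 * θ' * ρ)) / (2 * θ' ^ 2)) ∧
    (0 < θ' + ρ + Real.sqrt (ρ ^ 2 + 2 * θ' * ρ) ∧
      (θ' - (θ' + ρ + Real.sqrt (ρ ^ 2 + 2 * θ' * ρ))) ^ 2 /
          (2 * (θ' + ρ + Real.sqrt (ρ ^ 2 + 2 * θ' * ρ))) ≤ ρ ∧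
      1 / (2 * (θ' + ρ + Real.sqrt (ρ ^ 2 + 2 * θ' * ρ))) =
        1 / (2 * θ') + (ρ - Real.sqrt (ρ ^ 2 + 2 * θ' * ρ)) / (2 * θ' ^ 2)) := by
  have hpos : 0 < θ' + ρ + √(ρ ^ 2 + 2 * θ' * ρ) := by positivity
  have hmem : (θ' - (θ' + ρ + √(ρ ^ 2 + 2 * θ' * ρ))) ^ 2 /
      (2 * (θ' + ρ + √(ρ ^ 2 + 2 * θ' * ρ))) ≤ ρ := by
    rw [sq_sub_div_two_mul_le_iff hpos, add_sub_cancel_left, Real.sq_sqrt (by positivity)]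
  have heq := one_div_two_mul_add_add_sqrt hθ' hρ.le
  refine ⟨⟨⟨_, hpos, hmem, heq.symm⟩, ?_⟩, hpos, hmem, heq⟩
  rintro _ ⟨θ, hθ, hc, rfl⟩
  rw [← heq]
  exact one_div_le_one_div_of_le (by positivity)
    (mul_le_mul_of_nonneg_left (le_add_sqrt_of_sq_sub_le ((sq_sub_div_two_mul_le_iff hθ).1 hc))
      zero_le_two)
end

section
/- SDP reformulation for the CIR process confidence bound: Let δ > 0, σ > 0, ρ > 0 and θ' > 0 be real numbers. Then the minimum of (δσ²/2)·ϑ² over ϑ > 0 subject to ϑ²θ'² − 2ϑ(θ' + σ²ρ/δ) + 1 ≤ 0 equals the maximum of γ over real numbers γ ≥ 0 and λ ≥ 0 such that the symmetric 2×2 matrix with entries M₁₁ = δσ²/2 + λθ'², M₁₂ = M₂₁ = −λ(θ' + σ²ρ/δ), M₂₂ = λ − γ is positive semidefinite. (In particular the positivity constraint ϑ > 0 may be relaxed to ϑ ∈ ℝ without changing the optimal value, since ϑ = 1/θ' is strictly feasible and strong Lagrangian duality holds.) -/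
/-!
Write `a = δσ²/2`, `c = θ'²`, `b = θ' + σ²ρ/δ` and `q(ϑ) = c ϑ² − 2bϑ + 1`. Since `b² > c`, `q` has
two positive roots `t < u`, the feasible set is `[t, u]`, and both primal problems are minimised at
`ϑ = t`. Testing a positive semidefinite dual matrix against `(t, 1)` gives
`γ ≤ a t² + λ q(t) = a t²` (weak duality), and the multiplier `λ = 2at / (c(u − t))` turns the dual
matrix into the rank-one matrix `(a + λc) (1, −t)(1, −t)ᵀ` with `γ = a t²`.
-/

set_option autoImplicit false

open Matrix Set

section QuadraticConstraint

variable {b c t u : ℝ}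

theorem exists_vieta_roots_of_lt_sq (hc : 0 < c) (hcb : c < b ^ 2) :
    ∃ t u : ℝ, t < u ∧ c * t * u = 1 ∧ c * (t + u) = 2 * b := by
  set s := Real.sqrt (b ^ 2 - c)
  have hs : 0 < s := Real.sqrt_pos.mpr (by linarith)
  have hs2 : s ^ 2 = b ^ 2 - c := Real.sq_sqrt (by linarith)
  refine ⟨(b - s) / c, (b + s) / c, ?_, ?_, ?_⟩
  · gcongr
    linarith
  · field_simp
    linear_combination -hs2
  · field_simp
    ring

theorem pos_of_vieta (hc : 0 < c) (hb : 0 < b) (hprod : c * t * u = 1)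
    (hsum : c * (t + u) = 2 * b) : 0 < t := by
  have htu : 0 < t * u := pos_of_mul_pos_right (by linarith [mul_assoc c t u]) hc.le
  rcases pos_and_pos_or_neg_and_neg_of_mul_pos htu with ⟨ht, -⟩ | ⟨ht, hu⟩
  · exact ht
  · nlinarith

theorem quadratic_eq_mul_sub_mul_sub (hprod : c * t * u = 1) (hsum : c * (t + u) = 2 * b)
    (ϑ : ℝ) : ϑ ^ 2 * c - 2 * ϑ * b + 1 = c * ((ϑ - t) * (ϑ - u)) := by
  linear_combination ϑ * hsum - hprod

theorem quadratic_nonpos_iff (hc : 0 < c) (htu : t ≤ u) (hprod : c * t * u = 1)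
    (hsum : c * (t + u) = 2 * b) {ϑ : ℝ} :
    ϑ ^ 2 * c - 2 * ϑ * b + 1 ≤ 0 ↔ ϑ ∈ Icc t u := by
  rw [quadratic_eq_mul_sub_mul_sub hprod hsum, mem_Icc]
  constructor
  · intro h
    have h' : (ϑ - t) * (ϑ - u) ≤ 0 := nonpos_of_mul_nonpos_right h hc
    constructor <;> nlinarith
  · rintro ⟨htϑ, hϑu⟩
    exact mul_nonpos_of_nonneg_of_nonpos hc.le
      (mul_nonpos_of_nonneg_of_nonpos (sub_nonneg.2 htϑ) (sub_nonpos.2 hϑu))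

theorem isLeast_mul_sq_of_quadratic_nonpos {a : ℝ} (ha : 0 ≤ a) (hc : 0 < c) (ht : 0 ≤ t)
    (htu : t ≤ u) (hprod : c * t * u = 1) (hsum : c * (t + u) = 2 * b) :
    IsLeast {w : ℝ | ∃ ϑ : ℝ, ϑ ^ 2 * c - 2 * ϑ * b + 1 ≤ 0 ∧ w = a * ϑ ^ 2} (a * t ^ 2) := by
  refine ⟨⟨t, (quadratic_nonpos_iff hc htu hprod hsum).2 ⟨le_rfl, htu⟩, rfl⟩, ?_⟩
  rintro w ⟨ϑ, hϑ, rfl⟩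
  have htϑ := ((quadratic_nonpos_iff hc htu hprod hsum).1 hϑ).1
  gcongr

end QuadraticConstraint

section DualMatrix

variable {a b c : ℝ}

theorem le_lagrangian_of_posSemidef {lam γ : ℝ}
    (hM : PosSemidef !![a + lam * c, -(lam * b); -(lam * b), lam - γ]) (ϑ : ℝ) :
    γ ≤ a * ϑ ^ 2 + lam * (ϑ ^ 2 * c - 2 * ϑ * b + 1) := by
  have h := hM.dotProduct_mulVec_nonneg ![ϑ, 1]
  simp only [mulVec, dotProduct, Fin.sum_univ_two, of_apply, cons_val', cons_val_zero,
    cons_val_one, empty_val', cons_val_fin_one, star_trivial] at h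
  linear_combination h

theorem posSemidef_rankOne {k : ℝ} (hk : 0 ≤ k) (t : ℝ) :
    PosSemidef !![k, -(k * t); -(k * t), k * t ^ 2] := by
  have hrank : !![k, -(k * t); -(k * t), k * t ^ 2] = k • vecMulVec ![1, -t] (star ![1, -t]) := by
    ext i j
    fin_cases i <;> fin_cases j <;> simp [vecMulVec, sq]
  rw [hrank]
  exact (posSemidef_vecMulVec_self_star _).smul hk

theorem isGreatest_sdp_dual {t u : ℝ} (ha : 0 ≤ a) (hc : 0 < c) (ht : 0 ≤ t) (htu : t < u)
    (hprod : c * t * u = 1) (hsum : c * (t + u) = 2 * b) :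
    IsGreatest {γ : ℝ | 0 ≤ γ ∧ ∃ lam : ℝ, 0 ≤ lam ∧
      PosSemidef !![a + lam * c, -(lam * b); -(lam * b), lam - γ]} (a * t ^ 2) := by
  refine ⟨⟨by positivity, ?_⟩, ?_⟩
  · set lam := 2 * a * t / (c * (u - t))
    have hlam : lam * (c * (u - t)) = 2 * a * t := div_mul_cancel₀ _ (by nlinarith)
    refine ⟨lam, by positivity, ?_⟩
    have hoff : lam * b = (a + lam * c) * t := by linear_combination hlam / 2 - lam * hsum / 2
    have hdiag : lam - a * t ^ 2 = (a + lam * c) * t ^ 2 := by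
      linear_combination t * hlam - lam * hprod
    rw [hoff, hdiag]
    exact posSemidef_rankOne (by positivity) t
  · rintro γ ⟨-, lam, -, hM⟩
    simpa [quadratic_eq_mul_sub_mul_sub hprod hsum] using le_lagrangian_of_posSemidef hM t

end DualMatrix

/-- SDP reformulation for the CIR-process confidence bound: for
`δ, σ, ρ, θ' > 0`, the minimum of `(δσ²/2)ϑ²` over `ϑ > 0` with
`ϑ²θ'² − 2ϑ(θ' + σ²ρ/δ) + 1 ≤ 0` equals the maximum of `γ` over `γ ≥ 0`, `λ ≥ 0` such
that the symmetric matrix `[[δσ²/2 + λθ'², −λ(θ' + σ²ρ/δ)], [−λ(θ' + σ²ρ/δ), λ − γ]]` is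
positive semidefinite; moreover the positivity constraint `ϑ > 0` may be relaxed to
`ϑ ∈ ℝ` without changing the optimal value. -/
theorem stmt19 (δ σ ρ θ' : ℝ) (hδ : 0 < δ) (hσ : 0 < σ) (hρ : 0 < ρ) (hθ' : 0 < θ') :
    ∃ v : ℝ,
      IsLeast {w : ℝ | ∃ ϑ : ℝ, 0 < ϑ ∧
        ϑ ^ 2 * θ' ^ 2 - 2 * ϑ * (θ' + σ ^ 2 * ρ / δ) + 1 ≤ 0 ∧
        w = δ * σ ^ 2 / 2 * ϑ ^ 2} v ∧
      IsGreatest {γ : ℝ | 0 ≤ γ ∧ ∃ lam : ℝ, 0 ≤ lam ∧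
        Matrix.PosSemidef
          !![δ * σ ^ 2 / 2 + lam * θ' ^ 2, -(lam * (θ' + σ ^ 2 * ρ / δ));
             -(lam * (θ' + σ ^ 2 * ρ / δ)), lam - γ]} v ∧
      IsLeast {w : ℝ | ∃ ϑ : ℝ,
        ϑ ^ 2 * θ' ^ 2 - 2 * ϑ * (θ' + σ ^ 2 * ρ / δ) + 1 ≤ 0 ∧
        w = δ * σ ^ 2 / 2 * ϑ ^ 2} v := by
  have hc : 0 < θ' ^ 2 := by positivity
  have hθb : θ' < θ' + σ ^ 2 * ρ / δ := lt_add_of_pos_right _ (by positivity)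
  obtain ⟨t, u, htu, hprod, hsum⟩ :=
    exists_vieta_roots_of_lt_sq hc (pow_lt_pow_left₀ hθb hθ'.le two_ne_zero)
  have ht : 0 < t := pos_of_vieta hc (hθ'.trans hθb) hprod hsum
  have ha : 0 ≤ δ * σ ^ 2 / 2 := by positivity
  have hrelaxed := isLeast_mul_sq_of_quadratic_nonpos ha hc ht.le htu.le hprod hsum
  refine ⟨_, ⟨?_, ?_⟩, isGreatest_sdp_dual ha hc ht.le htu hprod hsum, hrelaxed⟩
  · exact ⟨t, ht, (quadratic_nonpos_iff hc htu.le hprod hsum).2 ⟨le_rfl, htu.le⟩, rfl⟩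
  · rintro w ⟨ϑ, -, hϑ, rfl⟩
    exact hrelaxed.2 ⟨ϑ, hϑ, rfl⟩
end
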